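/- Let m, n be natural numbers with m ≥ 1 odd, set M := m − 2n, and assume M ≤ −1 (so M is a negative odd integer); set j₀ := (1 − M)/2. Let f : [0,∞) → ℝ be n times continuously differentiable such that: (a) for every j₀ ≤ j ≤ n, the function r ↦ r^{M+2j−1}·f^{(j)}(r²) is Lebesgue integrable on (0,∞); (b) for every j₀ ≤ j ≤ n−1, lim_{r→∞} r^{M+2j}·f^{(j)}(r²) = 0. Then (−1)^n · π^{−n} · ∫_{ℝ^m} f^{(n)}(|x|²) dx = 2 · (−1)^{j₀} · π^{−j₀} · ∫_0^∞ f^{(j₀)}(r²) dr. -/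

import Mathlib

/-!
Write `m = 2k + 1`, so that `n = j₀ + k`. In polar coordinates the integral over `ℝ^m` becomes
`2 π^{m/2} / Γ(m/2) · ∫_0^∞ r^{2k} f^{(n)}(r²) dr`. Integrating by parts against `r^{2i+1}`
(boundary terms vanish by the decay hypothesis) multiplies the integral by `-(i + 1/2)` while
lowering the power to `r^{2i}` and the derivative order by one, so after `k` steps one picks up
`(-1)^k Γ(k + 1/2) / Γ(1/2)`, which cancels the Gamma factor of the sphere area.
-/

open MeasureTheory Filter Set Real Topology

theorem ContDiffOn.hasDerivAt_iteratedDerivWithin {𝕜 F : Type*} [NontriviallyNormedField 𝕜]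
    [NormedAddCommGroup F] [NormedSpace 𝕜 F] {f : 𝕜 → F} {s : Set 𝕜} {n j : ℕ}
    (hf : ContDiffOn 𝕜 n f s) (hs : UniqueDiffOn 𝕜 s) (hj : j < n) {x : 𝕜} (hx : s ∈ 𝓝 x) :
    HasDerivAt (iteratedDerivWithin j f s) (iteratedDerivWithin (j + 1) f s x) x := by
  rw [iteratedDerivWithin_succ]
  exact ((hf.differentiableOn_iteratedDerivWithin (mod_cast hj) hs).differentiableAt hx)
    |>.hasDerivAt.congr_deriv (derivWithin_of_mem_nhds hx).symm

theorem integral_fun_norm_euclideanSpace {m : ℕ} (hm : m ≠ 0) (h : ℝ → ℝ) :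
    ∫ x : EuclideanSpace ℝ (Fin m), h ‖x‖
      = 2 * √π ^ m / Gamma (m / 2) * ∫ r in Ioi 0, r ^ (m - 1) * h r := by
  have : Nonempty (Fin m) := ⟨⟨0, Nat.pos_of_ne_zero hm⟩⟩
  have hm' : (m : ℝ) / 2 ≠ 0 := by positivity
  rw [integral_fun_norm_addHaar, measureReal_def, EuclideanSpace.volume_ball,
    finrank_euclideanSpace_fin, Fintype.card_fin, Gamma_add_one hm']
  simp only [ENNReal.ofReal_one, one_pow, one_mul, nsmul_eq_mul, smul_eq_mul]
  rw [ENNReal.toReal_ofReal (by positivity)]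
  field_simp

theorem integral_Ioi_pow_mul_deriv_comp_sq {g g' : ℝ → ℝ} (s : ℕ)
    (hg : ContinuousWithinAt g (Ici 0) 0) (hderiv : ∀ x ∈ Ioi (0 : ℝ), HasDerivAt g (g' x) x)
    (hint : IntegrableOn (fun r ↦ r ^ (2 * s) * g (r ^ 2)) (Ioi 0))
    (hint' : IntegrableOn (fun r ↦ r ^ (2 * s + 2) * g' (r ^ 2)) (Ioi 0))
    (hlim : Tendsto (fun r ↦ r ^ (2 * s + 1) * g (r ^ 2)) atTop (𝓝 0)) :
    ∫ r in Ioi 0, r ^ (2 * s + 2) * g' (r ^ 2)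
      = -(s + 1 / 2) * ∫ r in Ioi 0, r ^ (2 * s) * g (r ^ 2) := by
  have hu (r : ℝ) : HasDerivAt (· ^ (2 * s + 1)) ((2 * s + 1 : ℕ) * r ^ (2 * s)) r := by
    simpa using hasDerivAt_pow (2 * s + 1) r
  have hv : ∀ r ∈ Ioi (0 : ℝ), HasDerivAt (fun r ↦ g (r ^ 2)) (g' (r ^ 2) * (2 * r)) r := by
    intro r hr
    have hsq : HasDerivAt (· ^ 2) (2 * r) r := by simpa using hasDerivAt_pow 2 r
    exact (hderiv (r ^ 2) (mem_Ioi.2 (pow_pos hr 2))).comp (h := (· ^ 2)) r hsq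
  have hzero : Tendsto (fun r ↦ r ^ (2 * s + 1) * g (r ^ 2)) (𝓝[>] 0) (𝓝 0) := by
    have hsq : Tendsto (· ^ 2) (𝓝[>] (0 : ℝ)) (𝓝[≥] 0) :=
      tendsto_nhdsWithin_of_tendsto_nhds_of_eventually_within _
        ((continuous_pow 2).tendsto' 0 0 (by simp) |>.mono_left nhdsWithin_le_nhds)
        (Eventually.of_forall fun r ↦ sq_nonneg r)
    simpa using ((continuous_pow _).tendsto' 0 0 (by simp)).mono_left nhdsWithin_le_nhds
      |>.mul (hg.tendsto.comp hsq)
  have huv' (r : ℝ) :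
      r ^ (2 * s + 1) * (g' (r ^ 2) * (2 * r)) = 2 * (r ^ (2 * s + 2) * g' (r ^ 2)) := by
    ring
  have hu'v (r : ℝ) : (2 * s + 1 : ℕ) * r ^ (2 * s) * g (r ^ 2)
      = (2 * s + 1 : ℕ) * (r ^ (2 * s) * g (r ^ 2)) :=
    mul_assoc _ _ _
  have hibp := integral_Ioi_mul_deriv_eq_deriv_mul (fun r _ ↦ hu r) hv
    (by simp only [Pi.mul_def, huv']; exact hint'.const_mul 2)
    (by simp only [Pi.mul_def, hu'v]; exact hint.const_mul _) hzero hlim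
  simp only [huv', hu'v, integral_const_mul] at hibp
  push_cast at hibp
  linarith

theorem integral_Ioi_pow_mul_comp_sq_eq_Gamma_mul {g : ℕ → ℝ → ℝ} (k : ℕ)
    (hcont : ∀ i < k, ContinuousWithinAt (g i) (Ici 0) 0)
    (hderiv : ∀ i < k, ∀ x ∈ Ioi (0 : ℝ), HasDerivAt (g i) (g (i + 1) x) x)
    (hint : ∀ i ≤ k, IntegrableOn (fun r ↦ r ^ (2 * i) * g i (r ^ 2)) (Ioi 0))
    (hlim : ∀ i < k, Tendsto (fun r ↦ r ^ (2 * i + 1) * g i (r ^ 2)) atTop (𝓝 0)) :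
    ∫ r in Ioi 0, r ^ (2 * k) * g k (r ^ 2)
      = (-1) ^ k * Gamma (k + 1 / 2) / √π * ∫ r in Ioi 0, g 0 (r ^ 2) := by
  induction k with
  | zero =>
    have : √π ≠ 0 := by positivity
    simp only [Nat.cast_zero, zero_add, Gamma_one_half_eq, mul_zero, pow_zero, one_mul,
      div_self this]
  | succ k ih =>
    have hk : (k : ℝ) + 1 / 2 ≠ 0 := by positivity
    rw [mul_add_one, integral_Ioi_pow_mul_deriv_comp_sq k (hcont k k.lt_succ_self)
        (hderiv k k.lt_succ_self) (hint k k.le_succ) (hint (k + 1) le_rfl) (hlim k k.lt_succ_self),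
      ih (fun i hi ↦ hcont i (hi.trans k.lt_succ_self))
        (fun i hi ↦ hderiv i (hi.trans k.lt_succ_self)) (fun i hi ↦ hint i (hi.trans k.le_succ))
        (fun i hi ↦ hlim i (hi.trans k.lt_succ_self)),
      Nat.cast_succ, add_right_comm, Gamma_add_one hk]
    ring

theorem stmt5_general (m n j₀ : ℕ) (hj₀ : m + 2 * j₀ = 2 * n + 1)
    (f : ℝ → ℝ) (hf : ContDiffOn ℝ n f (Set.Ici 0))
    (hint : ∀ j : ℕ, j₀ ≤ j → j ≤ n → IntegrableOn
      (fun r : ℝ => r ^ ((m : ℤ) - 2 * n + 2 * j - 1) * iteratedDerivWithin j f (Set.Ici 0) (r ^ 2))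
      (Set.Ioi 0))
    (hlim : ∀ j : ℕ, j₀ ≤ j → j < n → Tendsto
      (fun r : ℝ => r ^ ((m : ℤ) - 2 * n + 2 * j) * iteratedDerivWithin j f (Set.Ici 0) (r ^ 2))
      atTop (nhds 0)) :
    ((-1 : ℝ) ^ n / Real.pi ^ n) *
        ∫ x : EuclideanSpace ℝ (Fin m), iteratedDerivWithin n f (Set.Ici 0) (‖x‖ ^ 2)
      = 2 * ((-1 : ℝ) ^ j₀ / Real.pi ^ j₀) *
          ∫ r in Set.Ioi (0 : ℝ), iteratedDerivWithin j₀ f (Set.Ici 0) (r ^ 2) := by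
  obtain ⟨k, rfl⟩ : ∃ k, n = j₀ + k := ⟨n - j₀, by omega⟩
  obtain rfl : m = 2 * k + 1 := by omega
  have hexp (i : ℕ) : (↑(2 * k + 1) : ℤ) - 2 * ↑(j₀ + k) + 2 * ↑(j₀ + i) = ↑(2 * i + 1) := by
    push_cast; ring
  have hexp' (i : ℕ) : (↑(2 * k + 1) : ℤ) - 2 * ↑(j₀ + k) + 2 * ↑(j₀ + i) - 1 = ↑(2 * i) := by
    push_cast; ring
  have hradial := integral_fun_norm_euclideanSpace (by omega : 2 * k + 1 ≠ 0)
    fun r ↦ iteratedDerivWithin (j₀ + k) f (Ici 0) (r ^ 2)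
  have hreduce := integral_Ioi_pow_mul_comp_sq_eq_Gamma_mul
    (g := fun i ↦ iteratedDerivWithin (j₀ + i) f (Ici 0)) k
    (fun i hi ↦ hf.continuousOn_iteratedDerivWithin (mod_cast (by omega : j₀ + i ≤ j₀ + k))
      (uniqueDiffOn_Ici 0) 0 self_mem_Ici)
    (fun i hi x hx ↦ hf.hasDerivAt_iteratedDerivWithin (uniqueDiffOn_Ici 0) (by omega)
      (Ici_mem_nhds hx))
    (fun i hi ↦ by simpa only [hexp', zpow_natCast] using hint (j₀ + i) (by omega) (by omega))
    (fun i hi ↦ by simpa only [hexp, zpow_natCast] using hlim (j₀ + i) (by omega) (by omega))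
  have hhalf : ((2 * k + 1 : ℕ) : ℝ) / 2 = k + 1 / 2 := by push_cast; ring
  have hsqrt : √π ^ (2 * k + 1) = π ^ k * √π := by rw [pow_succ, pow_mul, sq_sqrt pi_pos.le]
  have hsign : (-1 : ℝ) ^ (j₀ + k) * (-1) ^ k = (-1) ^ j₀ := by
    rw [pow_add, mul_assoc, ← pow_add, Even.neg_one_pow ⟨k, rfl⟩, mul_one]
  rw [hradial, Nat.add_sub_cancel, hreduce, add_zero, hhalf, hsqrt, ← hsign, pow_add π]
  have : Gamma (k + 1 / 2) ≠ 0 := (Gamma_pos_of_pos (by positivity)).ne'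
  field_simp

/-- Theorem 3 ('dimensional reduction of Berezin integrals'), case `M = m − 2n ∈ −2ℕ−1`
(`m` odd, `j₀ = (1−M)/2`):
`(−1)^n π^{−n} ∫_{ℝ^m} f^{(n)}(|x|²) dx = 2 (−1)^{j₀} π^{−j₀} ∫_0^∞ f^{(j₀)}(r²) dr`. -/
theorem stmt5 (m n j₀ : ℕ) (hm : 1 ≤ m) (hmo : Odd m)
    (hM : (m : ℤ) - 2 * n ≤ -1) (hj₀ : m + 2 * j₀ = 2 * n + 1)
    (f : ℝ → ℝ) (hf : ContDiffOn ℝ n f (Set.Ici 0))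
    (hint : ∀ j : ℕ, j₀ ≤ j → j ≤ n → IntegrableOn
      (fun r : ℝ => r ^ ((m : ℤ) - 2 * n + 2 * j - 1) * iteratedDerivWithin j f (Set.Ici 0) (r ^ 2))
      (Set.Ioi 0))
    (hlim : ∀ j : ℕ, j₀ ≤ j → j < n → Tendsto
      (fun r : ℝ => r ^ ((m : ℤ) - 2 * n + 2 * j) * iteratedDerivWithin j f (Set.Ici 0) (r ^ 2))
      atTop (nhds 0)) :
    ((-1 : ℝ) ^ n / Real.pi ^ n) *
        ∫ x : EuclideanSpace ℝ (Fin m), iteratedDerivWithin n f (Set.Ici 0) (‖x‖ ^ 2)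
      = 2 * ((-1 : ℝ) ^ j₀ / Real.pi ^ j₀) *
          ∫ r in Set.Ioi (0 : ℝ), iteratedDerivWithin j₀ f (Set.Ici 0) (r ^ 2) :=
  stmt5_general m n j₀ hj₀ f hf hint hlim
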